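/- arXiv:1107.2639 — 2 statements merged into one kernel-verified Lean document; each statement's English description precedes it below -/
import Mathlib

section
/- Let P be a partial latin square of order n, and for each symbol σ let ν(σ) be the number of filled cells of P containing σ. Suppose that for every symbol σ, σ is missing from exactly n−ν(σ) rows and exactly n−ν(σ) columns, and suppose that for every empty cell b of P, Σ_{σ ∈ S(b)} 1/(n−ν(σ)) ≥ 1, where S(b) is the set of symbols supported by b. Then P satisfies Hall's Condition. -/
/-!
For each symbol σ put d(σ) = n - ν(σ). The empty cells of T supporting σ lie in rows and columns
missing σ, so they form a bipartite graph of maximum degree at most d(σ); by König's theorem it has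
a matching M(σ) with at least 1/d(σ) of its edges. Together with the cells of T already holding σ,
M(σ) is an independent set of cells supporting σ, so α(σ, T) ≥ #(cells of T holding σ) + #M(σ).
Counting each empty cell b of T with weight 1/d(σ) for every σ ∈ S(b), the hypothesis on S(b)
shows that the #M(σ) add up to at least the number of empty cells of T.
-/

open scoped Classical

section PLS

variable {n : ℕ}

/-- A partial latin square of order `n`: an `n × n` array of optional symbols,
no symbol occurring twice in any row or column. -/
def IsPLS (n : ℕ) (P : Fin n → Fin n → Option (Fin n)) : Prop :=
  (∀ i j j' σ, P i j = some σ → P i j' = some σ → j = j') ∧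
  (∀ i i' j σ, P i j = some σ → P i' j = some σ → i = i')

/-- `σ` is missing from row `i`. -/
def MissingRow (P : Fin n → Fin n → Option (Fin n)) (σ i : Fin n) : Prop :=
  ∀ j, P i j ≠ some σ

/-- `σ` is missing from column `j`. -/
def MissingCol (P : Fin n → Fin n → Option (Fin n)) (σ j : Fin n) : Prop :=
  ∀ i, P i j ≠ some σ

/-- A cell supports `σ` if it contains `σ`, or is empty and `σ` is missing from
its row and column. -/
def Supports (P : Fin n → Fin n → Option (Fin n)) (σ : Fin n) (c : Fin n × Fin n) : Prop :=
  P c.1 c.2 = some σ ∨ (P c.1 c.2 = none ∧ MissingRow P σ c.1 ∧ MissingCol P σ c.2)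

/-- A set of cells is independent if no two share a row or a column. -/
def IndepCells (S : Finset (Fin n × Fin n)) : Prop :=
  ∀ c ∈ S, ∀ c' ∈ S, c ≠ c' → c.1 ≠ c'.1 ∧ c.2 ≠ c'.2

/-- `alpha P σ T` : max size of an independent subset of `T` all of whose cells support `σ`. -/
noncomputable def alpha (P : Fin n → Fin n → Option (Fin n)) (σ : Fin n)
    (T : Finset (Fin n × Fin n)) : ℕ :=
  (T.powerset.filter (fun S => IndepCells S ∧ ∀ c ∈ S, Supports P σ c)).sup Finset.card

/-- Hall's Condition: every set of cells satisfies the Hall Inequality. -/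
def HallCond (n : ℕ) (P : Fin n → Fin n → Option (Fin n)) : Prop :=
  ∀ T : Finset (Fin n × Fin n), T.card ≤ ∑ σ : Fin n, alpha P σ T

/-- A latin square of order `n`. -/
def IsLatin (n : ℕ) (L : Fin n → Fin n → Fin n) : Prop :=
  (∀ i, Function.Injective (L i)) ∧ (∀ j, Function.Injective fun i => L i j)

/-- `L` is a completion of `P`. -/
def Completes (n : ℕ) (P : Fin n → Fin n → Option (Fin n)) (L : Fin n → Fin n → Fin n) : Prop :=
  IsLatin n L ∧ ∀ i j σ, P i j = some σ → L i j = σ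

end PLS

open Finset

def IsBipartiteMatching {α β : Type*} (M : Finset (α × β)) : Prop :=
  Set.InjOn Prod.fst (M : Set (α × β)) ∧ Set.InjOn Prod.snd (M : Set (α × β))

section Matching

variable {α β : Type*} [DecidableEq α] [DecidableEq β]

/-- Hall's theorem with deficiency `D`, proved by adjoining `D` new vertices to the right side,
each adjacent to every left vertex. -/
theorem exists_matching_of_card_le_card_image_add [Fintype α] (G : Finset (α × β)) (D : ℕ)
    (hG : ∀ A : Finset α, #A ≤ #((G.filter (·.1 ∈ A)).image Prod.snd) + D) :
    ∃ M ⊆ G, IsBipartiteMatching M ∧ Fintype.card α ≤ #M + D := by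
  set t : α → Finset (β ⊕ Fin D) := fun a =>
    (G.filter (·.1 = a)).image (Sum.inl ∘ Prod.snd) ∪ univ.image Sum.inr
  have hall : ∀ A : Finset α, #A ≤ #(A.biUnion t) := by
    intro A
    obtain rfl | ⟨a, ha⟩ := A.eq_empty_or_nonempty
    · simp
    have hsub : ((G.filter (·.1 ∈ A)).image Prod.snd).map Function.Embedding.inl ∪
        univ.map Function.Embedding.inr ⊆ A.biUnion t := by
      intro x hx
      simp only [mem_union, mem_map, mem_image, mem_filter, Function.Embedding.inl_apply,
        Function.Embedding.inr_apply] at hx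
      simp only [t, mem_biUnion, mem_union, mem_image, mem_filter, Function.comp_apply]
      rcases hx with ⟨b, ⟨p, ⟨hpG, hpA⟩, rfl⟩, rfl⟩ | ⟨i, -, rfl⟩
      · exact ⟨p.1, hpA, Or.inl ⟨p, ⟨hpG, rfl⟩, rfl⟩⟩
      · exact ⟨a, ha, Or.inr ⟨i, mem_univ _, rfl⟩⟩
    have hdisj : Disjoint (((G.filter (·.1 ∈ A)).image Prod.snd).map Function.Embedding.inl)
        (univ.map (Function.Embedding.inr : Fin D ↪ β ⊕ Fin D)) := by
      simp [disjoint_left]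
    calc #A ≤ #((G.filter (·.1 ∈ A)).image Prod.snd) + D := hG A
      _ = #(((G.filter (·.1 ∈ A)).image Prod.snd).map Function.Embedding.inl ∪
          univ.map Function.Embedding.inr) := by
        rw [card_union_of_disjoint hdisj, card_map, card_map, card_univ, Fintype.card_fin]
      _ ≤ #(A.biUnion t) := card_le_card hsub
  obtain ⟨f, hf_inj, hf_mem⟩ := (all_card_le_biUnion_card_iff_exists_injective t).1 hall
  set M := G.filter fun p => f p.1 = Sum.inl p.2
  refine ⟨M, filter_subset _ _, ⟨?_, ?_⟩, ?_⟩
  · intro p hp q hq h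
    have hp' := (mem_filter.1 hp).2
    have hq' := (mem_filter.1 hq).2
    rw [h, hq'] at hp'
    exact Prod.ext h (Sum.inl_injective hp').symm
  · intro p hp q hq h
    have hpq : f p.1 = f q.1 := by rw [(mem_filter.1 hp).2, (mem_filter.1 hq).2, h]
    exact Prod.ext (hf_inj hpq) h
  · have hcompl : #(M.image Prod.fst)ᶜ ≤ D := by
      calc #(M.image Prod.fst)ᶜ ≤ #(univ.image (Sum.inr : Fin D → β ⊕ Fin D)) := by
            refine card_le_card_of_injOn f (fun a ha => ?_) hf_inj.injOn
            rcases mem_union.1 (hf_mem a) with hleft | hright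
            · obtain ⟨p, hp, hpa⟩ := mem_image.1 hleft
              obtain ⟨hpG, rfl⟩ := mem_filter.1 hp
              refine absurd (mem_image_of_mem Prod.fst (mem_filter.2 ⟨hpG, ?_⟩)) (mem_compl.1 ha)
              exact hpa.symm
            · exact hright
        _ ≤ D := card_image_le.trans (by simp)
    calc Fintype.card α = #(M.image Prod.fst) + #(M.image Prod.fst)ᶜ :=
          (card_add_card_compl _).symm
      _ ≤ #M + D := add_le_add card_image_le hcompl

/-- König's bound. Take the deficiency at a set `A` of left vertices maximising `#A - #N(A)`:
the edges are covered by the `#N(A) + #Aᶜ` vertices of `N(A) ∪ Aᶜ`, each of degree at most `d`. -/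
theorem exists_matching_card_le_mul [Fintype α] (G : Finset (α × β)) (d : ℕ)
    (hrow : ∀ a, #(G.filter (·.1 = a)) ≤ d) (hcol : ∀ b, #(G.filter (·.2 = b)) ≤ d) :
    ∃ M ⊆ G, IsBipartiteMatching M ∧ #G ≤ #M * d := by
  set N : Finset α → Finset β := fun A => (G.filter (·.1 ∈ A)).image Prod.snd
  obtain ⟨A, hA⟩ := Finite.exists_max fun A : Finset α => (#A : ℤ) - #(N A)
  have hNA : #(N A) ≤ #A := by
    have hN0 : N ∅ = ∅ := by simp [N]
    have := hA ∅
    simp only [hN0, card_empty] at this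
    omega
  obtain ⟨M, hMG, hM, hMcard⟩ :=
    exists_matching_of_card_le_card_image_add G (#A - #(N A)) fun B => by have := hA B; change _ ≤ #(N B) + _; omega
  refine ⟨M, hMG, hM, ?_⟩
  have hin : #(G.filter (·.1 ∈ A)) ≤ d * #(N A) :=
    card_le_mul_card_image _ _ fun b _ =>
      (card_le_card fun p hp => by simp only [mem_filter] at hp ⊢; exact ⟨hp.1.1, hp.2⟩).trans
        (hcol b)
  have hout : #(G.filter (·.1 ∉ A)) ≤ d * #Aᶜ := by
    refine (card_le_mul_card_image (f := Prod.fst) _ _ fun a _ => ?_).trans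
      (Nat.mul_le_mul_left d (card_le_card fun a ha => ?_))
    · exact (card_le_card fun p hp => by
        simp only [mem_filter] at hp ⊢; exact ⟨hp.1.1, hp.2⟩).trans (hrow a)
    · obtain ⟨p, hp, rfl⟩ := mem_image.1 ha
      exact mem_compl.2 (mem_filter.1 hp).2
  have hcover : #(N A) + #Aᶜ ≤ #M := by
    have := card_le_univ A
    rw [card_compl]
    omega
  calc #G = #(G.filter (·.1 ∈ A)) + #(G.filter (·.1 ∉ A)) :=
        (card_filter_add_card_filter_not _).symm
    _ ≤ d * (#(N A) + #Aᶜ) := by rw [mul_add]; exact add_le_add hin hout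
    _ ≤ #M * d := by rw [mul_comm]; exact Nat.mul_le_mul_right d hcover

end Matching

theorem Finset.card_eq_sum_card_filter_eq_some_add {ι κ : Type*} [Fintype κ] [DecidableEq κ]
    (s : Finset ι) (f : ι → Option κ) :
    #s = ∑ k, #(s.filter (f · = some k)) + #(s.filter (f · = none)) := by
  rw [card_eq_sum_card_fiberwise (t := univ) fun x _ => mem_coe.2 (mem_univ (f x)),
    Fintype.sum_option, add_comm]

theorem Finset.card_le_sum_of_one_le_sum_weight {ι κ : Type*} [Fintype κ] (E : Finset ι)
    (r : ι → κ → Prop) (w : κ → ℚ) (m : κ → ℕ)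
    (hcover : ∀ b ∈ E, 1 ≤ ∑ k ∈ univ.filter (r b), w k)
    (hpack : ∀ k, (#(E.filter (r · k)) : ℚ) * w k ≤ m k) :
    #E ≤ ∑ k, m k := by
  have hswap : ∑ b ∈ E, ∑ k ∈ univ.filter (r b), w k = ∑ k, (#(E.filter (r · k)) : ℚ) * w k := by
    simp only [sum_filter]
    rw [sum_comm]
    refine sum_congr rfl fun k _ => ?_
    rw [← sum_filter, sum_const, nsmul_eq_mul]
  have : (#E : ℚ) ≤ ∑ k, (m k : ℚ) :=
    calc (#E : ℚ) = ∑ _b ∈ E, (1 : ℚ) := by simp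
      _ ≤ ∑ b ∈ E, ∑ k ∈ univ.filter (r b), w k := sum_le_sum hcover
      _ = ∑ k, (#(E.filter (r · k)) : ℚ) * w k := hswap
      _ ≤ ∑ k, (m k : ℚ) := sum_le_sum fun k _ => hpack k
  exact_mod_cast this

/-- If `ν ≥ n` the hypothesis forces `a = 0`, which covers the junk value `1 / 0 = 0` and the
negative weights. -/
theorem natCast_mul_one_div_sub_le {a b n ν : ℕ} (h : a ≤ b * (n - ν)) :
    (a : ℚ) * (1 / ((n : ℚ) - ν)) ≤ b := by
  rcases le_or_gt n ν with hnν | hνn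
  · rw [Nat.sub_eq_zero_of_le hnν, mul_zero, Nat.le_zero] at h
    simp [h]
  · have hpos : (0 : ℚ) < (n : ℚ) - ν := sub_pos.2 (by exact_mod_cast hνn)
    rw [mul_one_div, div_le_iff₀ hpos, ← Nat.cast_sub hνn.le]
    exact_mod_cast h

section PartialLatinSquare

variable {n : ℕ} {P : Fin n → Fin n → Option (Fin n)}

theorem IsBipartiteMatching.indepCells {S : Finset (Fin n × Fin n)} (hS : IsBipartiteMatching S) :
    IndepCells S := fun _ hc _ hc' hne =>
  ⟨fun h => hne (hS.1 hc hc' h), fun h => hne (hS.2 hc hc' h)⟩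

theorem Supports.missing_of_eq_none {σ : Fin n} {c : Fin n × Fin n} (hc : Supports P σ c)
    (hnone : P c.1 c.2 = none) : MissingRow P σ c.1 ∧ MissingCol P σ c.2 := by
  rcases hc with hsome | ⟨-, hrow, hcol⟩
  · simp [hnone] at hsome
  · exact ⟨hrow, hcol⟩

theorem IsPLS.ne_and_ne_of_supports (hP : IsPLS n P) {σ : Fin n} {c c' : Fin n × Fin n}
    (hc : P c.1 c.2 = some σ) (hc' : Supports P σ c') (hne : c ≠ c') :
    c.1 ≠ c'.1 ∧ c.2 ≠ c'.2 := by
  rcases hc' with hsome | ⟨-, hrow, hcol⟩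
  · exact ⟨fun h => hne (Prod.ext h (hP.1 _ _ _ σ hc (h ▸ hsome))),
      fun h => hne (Prod.ext (hP.2 _ _ _ σ hc (h ▸ hsome)) h)⟩
  · exact ⟨fun h => hrow c.2 (h ▸ hc), fun h => hcol c.1 (h ▸ hc)⟩

theorem card_le_alpha {σ : Fin n} {S T : Finset (Fin n × Fin n)} (hST : S ⊆ T)
    (hS : IndepCells S) (hsupp : ∀ c ∈ S, Supports P σ c) : #S ≤ alpha P σ T :=
  le_sup (f := card) (mem_filter.2 ⟨mem_powerset.2 hST, hS, hsupp⟩)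

theorem card_filter_eq_some_add_card_le_alpha (hP : IsPLS n P) {σ : Fin n}
    {M T : Finset (Fin n × Fin n)} (hMT : M ⊆ T) (hM : IndepCells M)
    (hMsupp : ∀ c ∈ M, P c.1 c.2 = none ∧ Supports P σ c) :
    #(T.filter fun c => P c.1 c.2 = some σ) + #M ≤ alpha P σ T := by
  set F := T.filter fun c => P c.1 c.2 = some σ
  have hF : ∀ c ∈ F, P c.1 c.2 = some σ := fun c hc => (mem_filter.1 hc).2
  have hdisj : Disjoint F M :=
    disjoint_left.2 fun c hcF hcM => by simpa [hF c hcF] using (hMsupp c hcM).1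
  have hindep : IndepCells (F ∪ M) := by
    intro c hc c' hc' hne
    rcases mem_union.1 hc with hcF | hcM <;> rcases mem_union.1 hc' with hc'F | hc'M
    · exact hP.ne_and_ne_of_supports (hF c hcF) (Or.inl (hF c' hc'F)) hne
    · exact hP.ne_and_ne_of_supports (hF c hcF) (hMsupp c' hc'M).2 hne
    · have := hP.ne_and_ne_of_supports (hF c' hc'F) (hMsupp c hcM).2 (Ne.symm hne)
      exact ⟨this.1.symm, this.2.symm⟩
    · exact hM c hcM c' hc'M hne
  rw [← card_union_of_disjoint hdisj]
  refine card_le_alpha (union_subset (filter_subset _ _) hMT) hindep fun c hc => ?_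
  rcases mem_union.1 hc with hcF | hcM
  · exact Or.inl (hF c hcF)
  · exact (hMsupp c hcM).2

theorem card_filter_supports_fst_eq_le (T : Finset (Fin n × Fin n)) (σ r : Fin n) :
    #(((T.filter fun c => P c.1 c.2 = none).filter (Supports P σ)).filter (·.1 = r)) ≤
      #(univ.filter (MissingCol P σ)) := by
  refine card_le_card_of_injOn Prod.snd (fun c hc => ?_) fun c hc c' hc' h => ?_
  · obtain ⟨⟨⟨-, hcE⟩, hcσ⟩, -⟩ := by simpa only [mem_coe, mem_filter] using hc
    exact mem_filter.2 ⟨mem_univ _, (hcσ.missing_of_eq_none hcE).2⟩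
  · exact Prod.ext ((mem_filter.1 (mem_coe.1 hc)).2.trans (mem_filter.1 (mem_coe.1 hc')).2.symm) h

theorem card_filter_supports_snd_eq_le (T : Finset (Fin n × Fin n)) (σ j : Fin n) :
    #(((T.filter fun c => P c.1 c.2 = none).filter (Supports P σ)).filter (·.2 = j)) ≤
      #(univ.filter (MissingRow P σ)) := by
  refine card_le_card_of_injOn Prod.fst (fun c hc => ?_) fun c hc c' hc' h => ?_
  · obtain ⟨⟨⟨-, hcE⟩, hcσ⟩, -⟩ := by simpa only [mem_coe, mem_filter] using hc
    exact mem_filter.2 ⟨mem_univ _, (hcσ.missing_of_eq_none hcE).1⟩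
  · exact Prod.ext h ((mem_filter.1 (mem_coe.1 hc)).2.trans (mem_filter.1 (mem_coe.1 hc')).2.symm)

end PartialLatinSquare

theorem stmt5_general (n : ℕ) (P : Fin n → Fin n → Option (Fin n)) (hP : IsPLS n P)
    (ν : Fin n → ℕ)
    (hrow : ∀ σ, (Finset.univ.filter (fun i => MissingRow P σ i)).card = n - ν σ)
    (hcol : ∀ σ, (Finset.univ.filter (fun j => MissingCol P σ j)).card = n - ν σ)
    (hb : ∀ b : Fin n × Fin n, P b.1 b.2 = none →
      1 ≤ ∑ σ ∈ Finset.univ.filter (fun σ => Supports P σ b),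
            (1 : ℚ) / ((n : ℚ) - (ν σ : ℚ))) :
    HallCond n P := by
  intro T
  set E := T.filter fun c => P c.1 c.2 = none
  choose M hME hM hEM using fun σ =>
    exists_matching_card_le_mul (E.filter (Supports P σ)) (n - ν σ)
      (fun r => hcol σ ▸ card_filter_supports_fst_eq_le T σ r)
      (fun j => hrow σ ▸ card_filter_supports_snd_eq_le T σ j)
  have hE : #E ≤ ∑ σ, #(M σ) :=
    card_le_sum_of_one_le_sum_weight E (fun b σ => Supports P σ b) _ _
      (fun b hbE => hb b (mem_filter.1 hbE).2) fun σ => natCast_mul_one_div_sub_le (hEM σ)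
  have halpha : ∀ σ, #(T.filter fun c => P c.1 c.2 = some σ) + #(M σ) ≤ alpha P σ T := fun σ =>
    card_filter_eq_some_add_card_le_alpha hP ((hME σ).trans ((filter_subset _ _).trans
      (filter_subset _ _))) (hM σ).indepCells fun c hc =>
        ⟨(mem_filter.1 (mem_filter.1 (hME σ hc)).1).2, (mem_filter.1 (hME σ hc)).2⟩
  calc #T = ∑ σ, #(T.filter fun c => P c.1 c.2 = some σ) + #E :=
        card_eq_sum_card_filter_eq_some_add T fun c => P c.1 c.2
    _ ≤ ∑ σ, (#(T.filter fun c => P c.1 c.2 = some σ) + #(M σ)) := by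
        rw [sum_add_distrib]; exact Nat.add_le_add_left hE _
    _ ≤ ∑ σ, alpha P σ T := sum_le_sum fun σ _ => halpha σ

theorem stmt5 (n : ℕ) (P : Fin n → Fin n → Option (Fin n)) (hP : IsPLS n P)
    (ν : Fin n → ℕ)
    (hν : ∀ σ, ν σ = (Finset.univ.filter
      (fun c : Fin n × Fin n => P c.1 c.2 = some σ)).card)
    (hrow : ∀ σ, (Finset.univ.filter (fun i => MissingRow P σ i)).card = n - ν σ)
    (hcol : ∀ σ, (Finset.univ.filter (fun j => MissingCol P σ j)).card = n - ν σ)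
    (hb : ∀ b : Fin n × Fin n, P b.1 b.2 = none →
      1 ≤ ∑ σ ∈ Finset.univ.filter (fun σ => Supports P σ b),
            (1 : ℚ) / ((n : ℚ) - (ν σ : ℚ))) :
    HallCond n P :=
  stmt5_general n P hP ν hrow hcol hb
end

section
/- Let P be a partial latin square of order n whose filled cells are exactly those of the upper-left r×s rectangle R. Let H be the set of all rn cells in the top r rows, and for each symbol σ let ν(σ) be the number of occurrences of σ in R. Then α(σ,H) = min{r, ν(σ)+n−s}. -/
open scoped Classical

/-!
An independent set of `σ`-supporting cells in the top `r` rows has one cell per row, hence at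
most `r` cells. Those of its cells that do not contain `σ` are empty, so they lie to the right of
the rectangle, in distinct columns: at most `n - s` of them. Conversely, the `ν` cells containing
`σ` (one in each of `ν` of the top rows) together with a matching between the `r - ν` top rows
missing `σ` and the `n - s` empty columns form an independent supporting set of size
`ν + min (r - ν) (n - s) = min r (ν + (n - s))`.
-/

open Finset

variable {n : ℕ}

theorem le_alpha {P : Fin n → Fin n → Option (Fin n)} {σ : Fin n}
    {T S : Finset (Fin n × Fin n)} (hST : S ⊆ T) (hS : IndepCells S)
    (hsupp : ∀ c ∈ S, Supports P σ c) :
    S.card ≤ alpha P σ T :=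
  le_sup (mem_filter.2 ⟨mem_powerset.2 hST, hS, hsupp⟩)

theorem alpha_le {P : Fin n → Fin n → Option (Fin n)} {σ : Fin n} {T : Finset (Fin n × Fin n)}
    {k : ℕ} (h : ∀ S ⊆ T, IndepCells S → (∀ c ∈ S, Supports P σ c) → S.card ≤ k) :
    alpha P σ T ≤ k :=
  Finset.sup_le fun S hS => by
    obtain ⟨hST, hind, hsupp⟩ := mem_filter.1 hS
    exact h S (mem_powerset.1 hST) hind hsupp

namespace IndepCells

variable {S S' : Finset (Fin n × Fin n)}

theorem mono (hS : IndepCells S) (h : S' ⊆ S) : IndepCells S' := fun c hc c' hc' =>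
  hS c (h hc) c' (h hc')

theorem injOn_fst (hS : IndepCells S) : Set.InjOn Prod.fst (S : Set (Fin n × Fin n)) :=
  fun c hc c' hc' h => by_contra fun hne => (hS c hc c' hc' hne).1 h

theorem injOn_snd (hS : IndepCells S) : Set.InjOn Prod.snd (S : Set (Fin n × Fin n)) :=
  fun c hc c' hc' h => by_contra fun hne => (hS c hc c' hc' hne).2 h

theorem union (hS : IndepCells S) (hS' : IndepCells S')
    (h : ∀ c ∈ S, ∀ c' ∈ S', c.1 ≠ c'.1 ∧ c.2 ≠ c'.2) : IndepCells (S ∪ S') := by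
  intro c hc c' hc' hne
  rcases mem_union.1 hc with hc | hc <;> rcases mem_union.1 hc' with hc' | hc'
  · exact hS c hc c' hc' hne
  · exact h c hc c' hc'
  · exact (h c' hc' c hc).imp Ne.symm Ne.symm
  · exact hS' c hc c' hc' hne

theorem card_le_of_forall_fst_lt {r : ℕ} (hS : IndepCells S) (h : ∀ c ∈ S, c.1.val < r) :
    S.card ≤ r := by
  have hinj : Set.InjOn (fun c : Fin n × Fin n => c.1.val) S :=
    Fin.val_injective.injOn.comp (injOn_fst hS) (Set.mapsTo_univ _ _)
  calc S.card = (S.image fun c => c.1.val).card := (card_image_of_injOn hinj).symm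
    _ ≤ (range r).card := card_le_card fun i hi => by
        obtain ⟨c, hc, rfl⟩ := mem_image.1 hi
        exact mem_range.2 (h c hc)
    _ = r := card_range r

theorem card_le_of_forall_le_snd {s : ℕ} (hS : IndepCells S) (h : ∀ c ∈ S, s ≤ c.2.val) :
    S.card ≤ n - s := by
  have hinj : Set.InjOn (fun c : Fin n × Fin n => c.2.val) S :=
    Fin.val_injective.injOn.comp (injOn_snd hS) (Set.mapsTo_univ _ _)
  calc S.card = (S.image fun c => c.2.val).card := (card_image_of_injOn hinj).symm
    _ ≤ (Ico s n).card := card_le_card fun j hj => by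
        obtain ⟨c, hc, rfl⟩ := mem_image.1 hj
        exact mem_Ico.2 ⟨h c hc, c.2.isLt⟩
    _ = n - s := Nat.card_Ico s n

end IndepCells

theorem exists_indepCells_subset_product (R C : Finset (Fin n)) :
    ∃ S ⊆ R ×ˢ C, IndepCells S ∧ S.card = min R.card C.card := by
  obtain ⟨R', hR', hR'card⟩ := exists_subset_card_eq (min_le_left R.card C.card)
  obtain ⟨C', hC', hC'card⟩ := exists_subset_card_eq (min_le_right R.card C.card)
  let e : R' ≃ C' := equivOfCardEq (hR'card.trans hC'card.symm)
  let f : R' ↪ Fin n × Fin n :=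
    ⟨fun i => (i.1, (e i).1), fun i j h => Subtype.ext (congrArg Prod.fst h)⟩
  refine ⟨R'.attach.map f, ?_, ?_, by rw [card_map, card_attach, hR'card]⟩
  · intro c hc
    obtain ⟨i, -, rfl⟩ := mem_map.1 hc
    exact mem_product.2 ⟨hR' i.2, hC' (e i).2⟩
  · intro c hc c' hc' hne
    obtain ⟨i, -, rfl⟩ := mem_map.1 hc
    obtain ⟨j, -, rfl⟩ := mem_map.1 hc'
    have hij : i ≠ j := fun h => hne (h ▸ rfl)
    exact ⟨fun h => hij (Subtype.ext h), fun h => hij (e.injective (Subtype.ext h))⟩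

def symbolCells (P : Fin n → Fin n → Option (Fin n)) (σ : Fin n) : Finset (Fin n × Fin n) :=
  univ.filter fun c => P c.1 c.2 = some σ

theorem mem_symbolCells {P : Fin n → Fin n → Option (Fin n)} {σ : Fin n} {c : Fin n × Fin n} :
    c ∈ symbolCells P σ ↔ P c.1 c.2 = some σ := by
  simp [symbolCells]

theorem IsPLS.indepCells_symbolCells {P : Fin n → Fin n → Option (Fin n)} (hP : IsPLS n P)
    (σ : Fin n) : IndepCells (symbolCells P σ) := by
  intro c hc c' hc' hne
  rw [mem_symbolCells] at hc hc'
  refine ⟨fun h => hne (Prod.ext h ?_), fun h => hne (Prod.ext ?_ h)⟩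
  · exact hP.1 c.1 c.2 c'.2 σ hc (h ▸ hc')
  · exact hP.2 c.1 c'.1 c.2 σ hc (h ▸ hc')

theorem Fin.card_filter_le_val {s : ℕ} :
    (univ.filter fun j : Fin n => s ≤ j.val).card = n - s := by
  have h := card_filter_add_card_filter_not (s := (univ : Finset (Fin n))) (fun j => j.val < s)
  simp only [not_lt, card_univ, Fintype.card_fin] at h
  rw [Fin.card_filter_val_lt] at h
  omega

section Rectangle

def IsRectangular (P : Fin n → Fin n → Option (Fin n)) (r s : ℕ) : Prop :=
  ∀ i j : Fin n, P i j ≠ none ↔ (i.val < r ∧ j.val < s)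

variable {r s : ℕ} {P : Fin n → Fin n → Option (Fin n)} {σ : Fin n}

theorem lt_of_mem_symbolCells (hshape : IsRectangular P r s)
    {c : Fin n × Fin n} (hc : c ∈ symbolCells P σ) : c.1.val < r ∧ c.2.val < s :=
  (hshape c.1 c.2).1 (by rw [mem_symbolCells.1 hc]; exact Option.some_ne_none σ)

theorem eq_none_of_le_val (hshape : IsRectangular P r s)
    {i j : Fin n} (hj : s ≤ j.val) : P i j = none :=
  by_contra fun h => absurd ((hshape i j).1 h).2 (not_lt.2 hj)

theorem missingCol_of_le_val (hshape : IsRectangular P r s)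
    {j : Fin n} (hj : s ≤ j.val) : MissingCol P σ j := fun i => by
  rw [eq_none_of_le_val hshape hj]
  exact (Option.some_ne_none σ).symm

theorem Supports.le_val_snd (hshape : IsRectangular P r s)
    {c : Fin n × Fin n} (h : Supports P σ c) (hc : c ∉ symbolCells P σ) (hrow : c.1.val < r) :
    s ≤ c.2.val := by
  rcases h with h | ⟨hnone, -, -⟩
  · exact absurd (mem_symbolCells.2 h) hc
  · by_contra hcol
    exact (hshape c.1 c.2).2 ⟨hrow, not_le.1 hcol⟩ hnone

theorem card_le_card_symbolCells_add (hshape : IsRectangular P r s)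
    {S : Finset (Fin n × Fin n)} (hS : IndepCells S) (hsupp : ∀ c ∈ S, Supports P σ c)
    (hrows : ∀ c ∈ S, c.1.val < r) : S.card ≤ (symbolCells P σ).card + (n - s) := by
  have hrest : (S \ symbolCells P σ).card ≤ n - s := by
    refine (hS.mono sdiff_subset).card_le_of_forall_le_snd fun c hc => ?_
    obtain ⟨hcS, hc⟩ := mem_sdiff.1 hc
    exact (hsupp c hcS).le_val_snd hshape hc (hrows c hcS)
  calc S.card = (S ∩ symbolCells P σ).card + (S \ symbolCells P σ).card :=
        (card_inter_add_card_sdiff S _).symm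
    _ ≤ (symbolCells P σ).card + (n - s) := add_le_add (card_le_card inter_subset_right) hrest

theorem card_filter_missingRow (hP : IsPLS n P)
    (hshape : IsRectangular P r s) (hrn : r ≤ n) :
    (univ.filter fun i : Fin n => i.val < r ∧ MissingRow P σ i).card =
      r - (symbolCells P σ).card := by
  have hsub : (symbolCells P σ).image Prod.fst ⊆ univ.filter fun i : Fin n => i.val < r :=
    fun i hi => by
      obtain ⟨c, hc, rfl⟩ := mem_image.1 hi
      exact mem_filter.2 ⟨mem_univ _, (lt_of_mem_symbolCells hshape hc).1⟩
  have hdiff : (univ.filter fun i : Fin n => i.val < r) \ (symbolCells P σ).image Prod.fst =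
      univ.filter fun i : Fin n => i.val < r ∧ MissingRow P σ i := by
    ext i
    simp only [mem_sdiff, mem_filter, mem_univ, true_and, mem_image, mem_symbolCells]
    simp [MissingRow]
  rw [← hdiff, card_sdiff_of_subset hsub, Fin.card_filter_val_lt, min_eq_right hrn,
    card_image_of_injOn (IndepCells.injOn_fst (hP.indepCells_symbolCells σ))]

theorem exists_indepCells_supports_card_eq (hP : IsPLS n P)
    (hshape : IsRectangular P r s) (hrn : r ≤ n) :
    ∃ S : Finset (Fin n × Fin n), (∀ c ∈ S, c.1.val < r) ∧ IndepCells S ∧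
      (∀ c ∈ S, Supports P σ c) ∧
      S.card = (symbolCells P σ).card + min (r - (symbolCells P σ).card) (n - s) := by
  obtain ⟨M, hMsub, hM, hMcard⟩ := exists_indepCells_subset_product
    (univ.filter fun i : Fin n => i.val < r ∧ MissingRow P σ i)
    (univ.filter fun j : Fin n => s ≤ j.val)
  rw [card_filter_missingRow hP hshape hrn, Fin.card_filter_le_val] at hMcard
  have hMcell : ∀ c ∈ M, (c.1.val < r ∧ MissingRow P σ c.1) ∧ s ≤ c.2.val :=
    fun c hc => by simpa using mem_product.1 (hMsub hc)
  have hsep : ∀ c ∈ symbolCells P σ, ∀ c' ∈ M, c.1 ≠ c'.1 ∧ c.2 ≠ c'.2 :=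
    fun c hc c' hc' => ⟨fun h => (hMcell c' hc').1.2 c.2 (h ▸ mem_symbolCells.1 hc),
      Fin.ne_of_val_ne ((lt_of_mem_symbolCells hshape hc).2.trans_le (hMcell c' hc').2).ne⟩
  refine ⟨symbolCells P σ ∪ M, fun c hc => ?_, (hP.indepCells_symbolCells σ).union hM hsep,
    fun c hc => ?_, ?_⟩
  · rcases mem_union.1 hc with hc | hc
    exacts [(lt_of_mem_symbolCells hshape hc).1, (hMcell c hc).1.1]
  · rcases mem_union.1 hc with hc | hc
    · exact Or.inl (mem_symbolCells.1 hc)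
    · exact Or.inr ⟨eq_none_of_le_val hshape (hMcell c hc).2, (hMcell c hc).1.2,
        missingCol_of_le_val hshape (hMcell c hc).2⟩
  · have hdisj : Disjoint (symbolCells P σ) M :=
      disjoint_left.2 fun c hc hcM => (hsep c hc c hcM).1 rfl
    rw [card_union_of_disjoint hdisj, hMcard]

end Rectangle

theorem stmt6_general (n r s : ℕ) (hrn : r ≤ n)
    (P : Fin n → Fin n → Option (Fin n)) (hP : IsPLS n P)
    (hshape : ∀ i j : Fin n, P i j ≠ none ↔ (i.val < r ∧ j.val < s))
    (H : Finset (Fin n × Fin n))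
    (hH : H = Finset.univ.filter (fun c : Fin n × Fin n => c.1.val < r))
    (σ : Fin n) (ν : ℕ)
    (hν : ν = (Finset.univ.filter
      (fun c : Fin n × Fin n => P c.1 c.2 = some σ)).card) :
    alpha P σ H = min r (ν + (n - s)) := by
  replace hν : ν = (symbolCells P σ).card := hν
  have hmemH : ∀ c, c ∈ H ↔ c.1.val < r := fun c => by simp [hH]
  have hup : alpha P σ H ≤ min r (ν + (n - s)) := alpha_le fun S hSH hS hsupp =>
    have hrows : ∀ c ∈ S, c.1.val < r := fun c hc => (hmemH c).1 (hSH hc)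
    le_min (hS.card_le_of_forall_fst_lt hrows)
      (hν ▸ card_le_card_symbolCells_add hshape hS hsupp hrows)
  obtain ⟨S, hSrows, hS, hsupp, hScard⟩ :=
    exists_indepCells_supports_card_eq (σ := σ) hP hshape hrn
  have hlow : S.card ≤ alpha P σ H := le_alpha (fun c hc => (hmemH c).2 (hSrows c hc)) hS hsupp
  have hνr : ν ≤ r := hν ▸ (hP.indepCells_symbolCells σ).card_le_of_forall_fst_lt
    fun c hc => (lt_of_mem_symbolCells hshape hc).1
  omega

theorem stmt6 (n r s : ℕ) (hr : 1 ≤ r) (hrn : r ≤ n) (hs : 1 ≤ s) (hsn : s ≤ n)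
    (P : Fin n → Fin n → Option (Fin n)) (hP : IsPLS n P)
    (hshape : ∀ i j : Fin n, P i j ≠ none ↔ (i.val < r ∧ j.val < s))
    (H : Finset (Fin n × Fin n))
    (hH : H = Finset.univ.filter (fun c : Fin n × Fin n => c.1.val < r))
    (σ : Fin n) (ν : ℕ)
    (hν : ν = (Finset.univ.filter
      (fun c : Fin n × Fin n => P c.1 c.2 = some σ)).card) :
    alpha P σ H = min r (ν + (n - s)) :=
  stmt6_general n r s hrn P hP hshape H hH σ ν hν
end
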